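/- Let L be a layer system, R weakly layered according to L, and fix a rank r such that R is confluent on all terms of rank at most r. Let s, t₁,…,tₙ and u₁,…,uₙ be terms of rank at most r (foreign terms). If sᵢ →*_R tᵢ and sᵢ →*_R uᵢ for all i, then there exist terms v₁,…,vₙ of rank at most r such that tᵢ →*_R vᵢ and uᵢ →*_R vᵢ for all i, and moreover both (t₁,…,tₙ) ∝ (v₁,…,vₙ) and (u₁,…,uₙ) ∝ (v₁,…,vₙ), where (a₁,…,aₙ) ∝ (b₁,…,bₙ) means aᵢ = aⱼ implies bᵢ = bⱼ for all i, j. -/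

import Mathlib

/-- First-order terms over signature `F` and variables `V`. -/
inductive Tm (F V : Type) : Type
  | var : V → Tm F V
  | app : F → List (Tm F V) → Tm F V

namespace Tm

variable {F V G : Type}

/-- Applying a substitution to a term. -/
def subst (σ : V → Tm F V) : Tm F V → Tm F V
  | var x => σ x
  | app f ts => app f (ts.attach.map (fun ⟨t, _⟩ => subst σ t))
  decreasing_by · simp only [Tm.app.sizeOf_spec]; have := List.sizeOf_lt_of_mem ‹_›; omega

/-- List of (occurrences of) variables of a term. -/
def vars : Tm F V → List V
  | var x => [x]
  | app _ ts => ts.attach.flatMap (fun ⟨t, _⟩ => vars t)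
  decreasing_by · simp only [Tm.app.sizeOf_spec]; have := List.sizeOf_lt_of_mem ‹_›; omega

/-- Renaming the function symbols of a term. -/
def mapF (g : F → G) : Tm F V → Tm G V
  | var x => var x
  | app f ts => app (g f) (ts.attach.map (fun ⟨t, _⟩ => mapF g t))
  decreasing_by · simp only [Tm.app.sizeOf_spec]; have := List.sizeOf_lt_of_mem ‹_›; omega

/-- The subterm at a position (a list of argument indices), if the position exists. -/
def sub : List Nat → Tm F V → Option (Tm F V)
  | [], t => some t
  | _ :: _, var _ => none
  | i :: p, app _ ts => ts[i]?.bind (sub p)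

/-- Replacing the subterm at a position by another term. -/
def repl : List Nat → Tm F V → Tm F V → Tm F V
  | [], _, u => u
  | _ :: _, var x, _ => var x
  | i :: p, app f ts, u =>
      app f (match ts[i]? with
             | some t => ts.set i (repl p t u)
             | none => ts)

end Tm

/-- A rewrite rule: a pair of terms. -/
structure Rule (F V : Type) where
  lhs : Tm F V
  rhs : Tm F V

/-- The usual variable conditions on a rewrite rule: the left-hand side is
not a variable and all variables of the right-hand side occur in the left-hand side. -/
def WfRule {F V : Type} (ρ : Rule F V) : Prop :=
  (∀ x, ρ.lhs ≠ .var x) ∧ ∀ x, x ∈ ρ.rhs.vars → x ∈ ρ.lhs.vars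

/-- `s` rewrites to `t` at position `p` using rule `ρ`. -/
def StepAt {F V : Type} (p : List Nat) (ρ : Rule F V) (s t : Tm F V) : Prop :=
  ∃ σ : V → Tm F V, Tm.sub p s = some (Tm.subst σ ρ.lhs) ∧ t = Tm.repl p s (Tm.subst σ ρ.rhs)

/-- The rewrite relation of a TRS (set of rules). -/
def Step {F V : Type} (R : Set (Rule F V)) (s t : Tm F V) : Prop :=
  ∃ ρ ∈ R, ∃ p, StepAt p ρ s t

/-- `l` matches `t`: some substitution instance of `l` equals `t`. -/
def Matches {F V : Type} (l t : Tm F V) : Prop :=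
  ∃ σ : V → Tm F V, Tm.subst σ l = t

/-- Reflexive-transitive closure of rewriting. -/
abbrev Steps {F V : Type} (R : Set (Rule F V)) : Tm F V → Tm F V → Prop :=
  Relation.ReflTransGen (Step R)

/-- Confluence on a set of terms. -/
def ConfluentOn {F V : Type} (R : Set (Rule F V)) (T : Set (Tm F V)) : Prop :=
  ∀ s ∈ T, ∀ t u, Steps R s t → Steps R s u → ∃ v, Steps R t v ∧ Steps R u v

/-- Confluence (on all terms). -/
def Confluent {F V : Type} (R : Set (Rule F V)) : Prop :=
  ConfluentOn R Set.univ

/-- A relation is terminating if it admits no infinite sequences, i.e., its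
inverse is well-founded. -/
def TerminatingRel {α : Type} (r : α → α → Prop) : Prop :=
  WellFounded (fun a b => r b a)

/-- One step of `A` relative to `B`: `→B* · →A · →B*`. -/
def RelStep {F V : Type} (A B : Set (Rule F V)) (s t : Tm F V) : Prop :=
  ∃ s' t', Steps B s s' ∧ Step A s' t' ∧ Steps B t' t

/-- Relative termination of `A/B`. -/
def RelTerminating {F V : Type} (A B : Set (Rule F V)) : Prop :=
  TerminatingRel (RelStep A B)
/-- Contexts over `F` and `V`: terms over the signature extended with a
fresh hole constant (`Sum.inr ()`). -/
abbrev Ctx (F V : Type) := Tm (F ⊕ Unit) V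

/-- The empty context (the hole). -/
def hole {F V : Type} : Ctx F V := Tm.app (Sum.inr ()) []

/-- A context with no holes, i.e., a term. -/
def noHole {F V : Type} (C : Ctx F V) : Prop :=
  ∀ p : List Nat, Tm.sub p C ≠ some (hole (F := F) (V := V))

/-- `p` is a position of `C` whose root is a function symbol (not a hole, not a variable). -/
def funPos {F V : Type} (p : List Nat) (C : Ctx F V) : Prop :=
  ∃ (f : F) (ts : List (Ctx F V)), Tm.sub p C = some (Tm.app (Sum.inl f) ts)

/-- The partial order `⊑` on contexts: the smallest reflexive transitive
monotone relation with `hole ⊑ C` for every context `C`. -/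
inductive CLe {F V : Type} : Ctx F V → Ctx F V → Prop
  | refl (C : Ctx F V) : CLe C C
  | hole (C : Ctx F V) : CLe hole C
  | trans {C D E : Ctx F V} : CLe C D → CLe D E → CLe C E
  | mono (f : F ⊕ Unit) {Cs Ds : List (Ctx F V)} :
      List.Forall₂ CLe Cs Ds → CLe (Tm.app f Cs) (Tm.app f Ds)

/-- `M` is the merge (supremum w.r.t. `⊑`) of `C` and `D`. -/
def IsMerge {F V : Type} (C D M : Ctx F V) : Prop :=
  CLe C M ∧ CLe D M ∧ ∀ E, CLe C E → CLe D E → CLe M E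

/-- `L` is a top of `C` according to `𝕃`. -/
def TopOf {F V : Type} (𝕃 : Set (Ctx F V)) (C L : Ctx F V) : Prop :=
  L ∈ 𝕃 ∧ CLe L C

/-- `M` is a max-top of `C` according to `𝕃`: a top maximal w.r.t. `⊑`. -/
def MaxTopOf {F V : Type} (𝕃 : Set (Ctx F V)) (C M : Ctx F V) : Prop :=
  TopOf 𝕃 C M ∧ ∀ L, TopOf 𝕃 C L → CLe M L → L = M

/-- A layer system: a set of contexts satisfying (L1), (L2) and (L3). -/
structure LayerSystem {F V : Type} (𝕃 : Set (Ctx F V)) : Prop where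
  /-- (L1): every term has a non-empty top. -/
  L1 : ∀ t : Ctx F V, noHole t → ∃ L, TopOf 𝕃 t L ∧ L ≠ hole
  /-- (L2): `C[x]_p ∈ 𝕃` iff `C[□]_p ∈ 𝕃`. -/
  L2 : ∀ (C : Ctx F V) (p : List Nat) (x : V), (Tm.sub p C).isSome →
        (Tm.repl p C (Tm.var x) ∈ 𝕃 ↔ Tm.repl p C hole ∈ 𝕃)
  /-- (L3): layers are closed under merging at function positions. -/
  L3 : ∀ L ∈ 𝕃, ∀ N ∈ 𝕃, ∀ (p : List Nat) (Lp M : Ctx F V),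
        funPos p L → Tm.sub p L = some Lp → IsMerge Lp N M → Tm.repl p L M ∈ 𝕃

/-- Condition (W): rewrite steps at function positions of the max-top can be
mirrored on the max-top, yielding a layer. -/
def CondW {F V : Type} (R : Set (Rule (F ⊕ Unit) V)) (𝕃 : Set (Ctx F V)) : Prop :=
  ∀ (s M : Ctx F V) (p : List Nat) (ρ : Rule (F ⊕ Unit) V) (t : Ctx F V),
    noHole s → MaxTopOf 𝕃 s M → funPos p M → ρ ∈ R → StepAt p ρ s t →
    ∃ L ∈ 𝕃, StepAt p ρ M L

/-- Condition (C1): in (W), the resulting layer is the max-top of `t` or empty. -/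
def CondC1 {F V : Type} (R : Set (Rule (F ⊕ Unit) V)) (𝕃 : Set (Ctx F V)) : Prop :=
  ∀ (s M : Ctx F V) (p : List Nat) (ρ : Rule (F ⊕ Unit) V) (t L : Ctx F V),
    noHole s → MaxTopOf 𝕃 s M → funPos p M → ρ ∈ R → StepAt p ρ s t →
    StepAt p ρ M L → L ∈ 𝕃 → (L = hole ∨ MaxTopOf 𝕃 t L)

/-- Condition (C2): if `L ⊑ N` are layers then filling a hole of `L` with the
corresponding subcontext of `N` yields a layer. -/
def CondC2 {F V : Type} (𝕃 : Set (Ctx F V)) : Prop :=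
  ∀ L ∈ 𝕃, ∀ N ∈ 𝕃, CLe L N → ∀ (p : List Nat) (Np : Ctx F V),
    Tm.sub p L = some (hole (F := F) (V := V)) → Tm.sub p N = some Np →
    Tm.repl p L Np ∈ 𝕃

/-- A TRS is weakly layered according to `𝕃` if (W) holds. -/
def WeaklyLayered {F V : Type} (R : Set (Rule (F ⊕ Unit) V)) (𝕃 : Set (Ctx F V)) : Prop :=
  CondW R 𝕃

/-- A TRS is layered according to `𝕃` if (W), (C1) and (C2) hold. -/
def Layered {F V : Type} (R : Set (Rule (F ⊕ Unit) V)) (𝕃 : Set (Ctx F V)) : Prop :=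
  CondW R 𝕃 ∧ CondC1 R 𝕃 ∧ CondC2 𝕃

/-- `HasRank 𝕃 t n`: the rank of `t` (according to the layer system `𝕃`) is `n`,
i.e., `n = 1 + max` of the ranks of the aliens of `t` (the subterms at the hole
positions of the max-top of `t`). -/
inductive HasRank {F V : Type} (𝕃 : Set (Ctx F V)) : Ctx F V → Nat → Prop
  | intro (t M : Ctx F V) (n : Nat) (rk : List Nat → Nat) :
      MaxTopOf 𝕃 t M →
      (∀ (p : List Nat) (tp : Ctx F V), Tm.sub p M = some hole → Tm.sub p t = some tp →
        HasRank 𝕃 tp (rk p)) →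
      (∀ p : List Nat, Tm.sub p M = some hole → rk p ≤ n) →
      (n = 0 ∨ ∃ (p : List Nat) (tp : Ctx F V), Tm.sub p M = some hole ∧
        Tm.sub p t = some tp ∧ rk p = n) →
      HasRank 𝕃 t (n + 1)

/-!
Reducts of terms of rank at most `r` again have rank at most `r`: every term has a rank (a
max-top exists because `⊑` strictly increases a weight that is bounded on the tops of a term),
and rank does not increase along steps. Hence joinability is transitive through the terms `tᵢ`,
`uᵢ`, and by confluence the finitely many `tⱼ`, `uⱼ` joinable with `tᵢ` have a common reduct.
Taking it for `vᵢ` makes `vᵢ` depend only on this class, which is also the class of `uᵢ`; so `vᵢ`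
is a function of `tᵢ` and also a function of `uᵢ`.
-/

section Balance
open Relation
variable {α ι : Type*} {r : α → α → Prop}

theorem exists_common_reduct_of_join {a : α}
    (hconf : ∀ b c, ReflTransGen r a b → ReflTransGen r a c → Join (ReflTransGen r) b c)
    {S : Set α} (hS : S.Finite) (hjoin : ∀ b ∈ S, Join (ReflTransGen r) a b) :
    ∃ w, ReflTransGen r a w ∧ ∀ b ∈ S, ReflTransGen r b w := by
  induction S, hS using Set.Finite.induction_on with
  | empty => exact ⟨a, .refl, by simp⟩
  | @insert b S _ _ ih =>
    obtain ⟨w, haw, hSw⟩ := ih fun c hc => hjoin c (Set.mem_insert_of_mem b hc)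
    obtain ⟨d, had, hbd⟩ := hjoin b (Set.mem_insert b S)
    obtain ⟨e, hwe, hde⟩ := hconf w d haw had
    refine ⟨e, haw.trans hwe, ?_⟩
    rintro c (rfl | hc)
    · exact hbd.trans hde
    · exact (hSw c hc).trans hwe

theorem join_trans_of_confluent_at {a b c : α}
    (hconf : ∀ c d, ReflTransGen r b c → ReflTransGen r b d → Join (ReflTransGen r) c d)
    (hab : Join (ReflTransGen r) a b) (hbc : Join (ReflTransGen r) b c) :
    Join (ReflTransGen r) a c := by
  obtain ⟨x, hax, hbx⟩ := hab
  obtain ⟨y, hby, hcy⟩ := hbc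
  obtain ⟨z, hxz, hyz⟩ := hconf x y hbx hby
  exact ⟨z, hax.trans hxz, hcy.trans hyz⟩

theorem exists_balanced_join [Finite ι] {T : Set α}
    (hT : ∀ a b, a ∈ T → ReflTransGen r a b → b ∈ T)
    (hconf : ∀ a ∈ T, ∀ b c, ReflTransGen r a b → ReflTransGen r a c →
      Join (ReflTransGen r) b c)
    {s t u : ι → α} (hs : ∀ i, s i ∈ T)
    (hst : ∀ i, ReflTransGen r (s i) (t i)) (hsu : ∀ i, ReflTransGen r (s i) (u i)) :
    ∃ v : ι → α, (∀ i, ReflTransGen r (t i) (v i) ∧ ReflTransGen r (u i) (v i)) ∧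
      (∀ i j, t i = t j → v i = v j) ∧ (∀ i j, u i = u j → v i = v j) := by
  have ht_mem i : t i ∈ T := hT _ _ (hs i) (hst i)
  have hu_mem i : u i ∈ T := hT _ _ (hs i) (hsu i)
  have htu i : Join (ReflTransGen r) (t i) (u i) := hconf _ (hs i) _ _ (hst i) (hsu i)
  set S := Set.range t ∪ Set.range u
  have hS : S.Finite := (Set.finite_range t).union (Set.finite_range u)
  set cls : α → Set α := fun a => {b ∈ S | Join (ReflTransGen r) a b}
  have cls_t_eq_cls_u i : cls (t i) = cls (u i) := by
    ext b
    refine and_congr_right fun _ => ⟨fun h => ?_, fun h => ?_⟩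
    · exact join_trans_of_confluent_at (hconf _ (ht_mem i)) (Std.Symm.symm _ _ (htu i)) h
    · exact join_trans_of_confluent_at (hconf _ (hu_mem i)) (htu i) h
  have hred i : ∃ w, ∀ b ∈ cls (t i), ReflTransGen r b w :=
    let ⟨w, _, hw⟩ := exists_common_reduct_of_join (hconf _ (ht_mem i))
      (hS.subset fun _ hb => hb.1) fun _ hb => hb.2
    ⟨w, hw⟩
  choose g hg using fun C : {C : Set α // ∃ w, ∀ b ∈ C, ReflTransGen r b w} => C.2
  refine ⟨fun i => g ⟨cls (t i), hred i⟩, fun i => ⟨?_, ?_⟩, fun i j h => ?_,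
    fun i j h => ?_⟩
  · exact hg _ (t i) ⟨Or.inl ⟨i, rfl⟩, ⟨t i, .refl, .refl⟩⟩
  · exact hg _ (u i) ⟨Or.inr ⟨i, rfl⟩, htu i⟩
  · exact congrArg g (Subtype.ext (by simp only [h]))
  · exact congrArg g (Subtype.ext (by simp only [cls_t_eq_cls_u, h]))

end Balance

namespace Tm
variable {F V : Type}

theorem sub_cons_app (i : ℕ) (p : List ℕ) (f : F) (ts : List (Tm F V)) :
    sub (i :: p) (app f ts) = ts[i]?.bind (sub p) := rfl

theorem subst_app (σ : V → Tm F V) (f : F) (ts : List (Tm F V)) :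
    subst σ (app f ts) = app f (ts.map (subst σ)) := by
  simp [subst]

theorem vars_app (f : F) (ts : List (Tm F V)) :
    vars (app f ts) = ts.flatMap vars := by
  simp [vars]

theorem sizeOf_le_of_sub [SizeOf F] [SizeOf V] :
    ∀ {p : List ℕ} {t tp : Tm F V}, sub p t = some tp → sizeOf tp ≤ sizeOf t
  | [], _, _, h => by cases h; rfl
  | _ :: _, .var _, _, h => by cases h
  | i :: p, .app f ts, tp, h => by
    obtain ⟨ti, hi, h⟩ := Option.bind_eq_some_iff.1 h
    have := List.sizeOf_lt_of_mem (List.mem_of_getElem? hi)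
    have := sizeOf_le_of_sub h
    simp only [app.sizeOf_spec]
    omega

theorem sizeOf_lt_of_sub_cons [SizeOf F] [SizeOf V] {i : ℕ} {p : List ℕ} {t tp : Tm F V}
    (h : sub (i :: p) t = some tp) : sizeOf tp < sizeOf t := by
  cases t with
  | var => cases h
  | app f ts =>
    obtain ⟨ti, hi, h⟩ := Option.bind_eq_some_iff.1 h
    have := List.sizeOf_lt_of_mem (List.mem_of_getElem? hi)
    have := sizeOf_le_of_sub h
    simp only [app.sizeOf_spec]
    omega

end Tm

section NoHole
variable {F V : Type}

theorem app_eq_hole_iff {f : F ⊕ Unit} {ts : List (Ctx F V)} :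
    Tm.app f ts = hole ↔ f = Sum.inr () ∧ ts = [] := by
  simp [hole]

theorem noHole_app_iff {f : F ⊕ Unit} {ts : List (Ctx F V)} :
    noHole (Tm.app f ts) ↔ Tm.app f ts ≠ hole ∧ ∀ t ∈ ts, noHole t := by
  refine ⟨fun h => ⟨fun he => h [] (by rw [he]; rfl), fun t ht p hp => ?_⟩, ?_⟩
  · obtain ⟨i, hi⟩ := List.getElem?_of_mem ht
    exact h (i :: p) (by rw [Tm.sub_cons_app, hi]; exact hp)
  · rintro ⟨hne, hts⟩ (_ | ⟨i, p⟩) hp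
    · exact hne (Option.some_injective _ hp)
    · obtain ⟨ti, hi, hp⟩ := Option.bind_eq_some_iff.1 hp
      exact hts ti (List.mem_of_getElem? hi) p hp

theorem noHole_of_sub :
    ∀ {p : List ℕ} {t tp : Ctx F V}, noHole t → Tm.sub p t = some tp → noHole tp
  | [], _, _, ht, h => by cases h; exact ht
  | _ :: _, .var _, _, _, h => by cases h
  | i :: p, .app f ts, tp, ht, h => by
    obtain ⟨ti, hi, h⟩ := Option.bind_eq_some_iff.1 h
    exact noHole_of_sub ((noHole_app_iff.1 ht).2 ti (List.mem_of_getElem? hi)) h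

theorem noHole_of_noHole_subst {σ : V → Ctx F V} :
    ∀ {l : Ctx F V}, noHole (Tm.subst σ l) → ∀ x ∈ l.vars, noHole (σ x)
  | .var y, h, x, hx => by
    rw [Tm.vars, List.mem_singleton] at hx
    subst hx
    rwa [Tm.subst] at h
  | .app f ts, h, x, hx => by
    rw [Tm.vars_app, List.mem_flatMap] at hx
    obtain ⟨t, ht, hx⟩ := hx
    rw [Tm.subst_app, noHole_app_iff] at h
    exact noHole_of_noHole_subst (h.2 _ (List.mem_map_of_mem ht)) x hx

theorem noHole_subst {σ : V → Ctx F V} :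
    ∀ {l : Ctx F V}, noHole l → (∀ x ∈ l.vars, noHole (σ x)) → noHole (Tm.subst σ l)
  | .var y, _, hσ => by rw [Tm.subst]; exact hσ y (by simp [Tm.vars])
  | .app f ts, hl, hσ => by
    rw [noHole_app_iff] at hl
    rw [Tm.subst_app, noHole_app_iff]
    refine ⟨?_, ?_⟩
    · simpa [app_eq_hole_iff] using hl.1
    · simp only [List.mem_map]
      rintro _ ⟨t, ht, rfl⟩
      exact noHole_subst (hl.2 t ht) fun x hx =>
        hσ x (by rw [Tm.vars_app]; exact List.mem_flatMap.2 ⟨t, ht, hx⟩)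

theorem noHole_repl :
    ∀ {p : List ℕ} {t u : Ctx F V}, noHole t → noHole u → noHole (Tm.repl p t u)
  | [], _, _, _, hu => hu
  | _ :: _, .var _, _, ht, _ => ht
  | i :: p, .app f ts, u, ht, hu => by
    rw [Tm.repl]
    cases hi : ts[i]? with
    | none => exact ht
    | some ti =>
      rw [noHole_app_iff] at ht ⊢
      refine ⟨?_, fun t' ht' => ?_⟩
      · simpa [app_eq_hole_iff, List.set_eq_nil_iff] using ht.1
      · rcases List.mem_or_eq_of_mem_set ht' with ht' | rfl
        · exact ht.2 t' ht'
        · exact noHole_repl (ht.2 ti (List.mem_of_getElem? hi)) hu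

theorem noHole_of_step {R : Set (Rule (F ⊕ Unit) V)}
    (hR : ∀ ρ ∈ R, (∀ x ∈ ρ.rhs.vars, x ∈ ρ.lhs.vars) ∧ noHole ρ.rhs)
    {s t : Ctx F V} (hs : noHole s) (h : Step R s t) : noHole t := by
  obtain ⟨ρ, hρ, p, σ, hsub, rfl⟩ := h
  obtain ⟨hvars, hrhs⟩ := hR ρ hρ
  have hσ := noHole_of_noHole_subst (noHole_of_sub hs hsub)
  exact noHole_repl hs (noHole_subst hrhs fun x hx => hσ x (hvars x hx))

end NoHole

section Rank
variable {F V : Type} {𝕃 : Set (Ctx F V)}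

/-- Variables and function symbols weigh 2 and the hole symbol weighs 1, so that `hole` is the
only context of weight 1 and `⊑` strictly increases the weight. -/
def weight : Ctx F V → ℕ
  | .var _ => 2
  | .app f ts =>
    Sum.elim (fun _ => 2) (fun _ => 1) f + (ts.attach.map fun ⟨t, _⟩ => weight t).sum

theorem weight_app (f : F ⊕ Unit) (ts : List (Ctx F V)) :
    weight (.app f ts) = Sum.elim (fun _ => 2) (fun _ => 1) f + (ts.map weight).sum := by
  simp [weight]

theorem weight_pos (C : Ctx F V) : 0 < weight C := by
  rcases C with _ | ⟨_ | _, _⟩ <;> simp [weight, weight_app]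

theorem one_lt_weight {C : Ctx F V} (h : C ≠ hole) : 1 < weight C := by
  match C with
  | .var _ => simp [weight]
  | .app (.inl _) _ => simp only [weight_app, Sum.elim_inl]; omega
  | .app (.inr ()) [] => exact absurd rfl h
  | .app (.inr ()) (t :: _) =>
    have := weight_pos t
    simp only [weight_app, Sum.elim_inr, List.map_cons, List.sum_cons]
    omega

theorem eq_or_weight_lt_of_cle {C D : Ctx F V} (h : CLe C D) : C = D ∨ weight C < weight D := by
  refine CLe.rec (motive_1 := fun C D _ => C = D ∨ weight C < weight D)
    (motive_2 := fun Cs Ds _ => Cs = Ds ∨ (Cs.map weight).sum < (Ds.map weight).sum)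
    (fun _ => .inl rfl) (fun D => ?_) (fun _ _ h₁ h₂ => ?_) (fun f _ _ _ h => ?_) (.inl rfl)
    (fun _ _ h₁ h₂ => ?_) h
  · by_cases hD : hole = D
    · exact .inl hD
    · exact .inr (by simpa [hole, weight_app] using one_lt_weight (Ne.symm hD))
  · rcases h₁ with rfl | h₁
    · exact h₂
    · exact .inr (h₂.elim (· ▸ h₁) h₁.trans)
  · rcases h with rfl | h
    · exact .inl rfl
    · exact .inr (by simp only [weight_app]; omega)
  · rcases h₁ with rfl | h₁ <;> rcases h₂ with rfl | h₂
    · exact .inl rfl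
    all_goals exact .inr (by simp only [List.map_cons, List.sum_cons]; omega)

theorem weight_le_of_cle {C D : Ctx F V} (h : CLe C D) : weight C ≤ weight D :=
  (eq_or_weight_lt_of_cle h).elim (fun h => h ▸ le_rfl) le_of_lt

theorem exists_maxTopOf {t L₀ : Ctx F V} (hL₀ : TopOf 𝕃 t L₀) (hne : L₀ ≠ hole) :
    ∃ M, MaxTopOf 𝕃 t M ∧ M ≠ hole := by
  have hnonempty : (weight '' {L | TopOf 𝕃 t L}).Nonempty := ⟨_, L₀, hL₀, rfl⟩
  have hbdd : BddAbove (weight '' {L | TopOf 𝕃 t L}) :=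
    ⟨weight t, by rintro _ ⟨L, hL, rfl⟩; exact weight_le_of_cle hL.2⟩
  obtain ⟨M, hM, hMw⟩ := Nat.sSup_mem hnonempty hbdd
  have hmax : MaxTopOf 𝕃 t M := by
    refine ⟨hM, fun L hL hML => ((eq_or_weight_lt_of_cle hML).resolve_right fun hlt => ?_).symm⟩
    have := le_csSup hbdd ⟨L, hL, rfl⟩
    omega
  exact ⟨M, hmax, fun h => hne ((hmax.2 L₀ hL₀ (h ▸ CLe.hole L₀)).trans h)⟩

/-- The size bound is what makes the ranks of the aliens have a maximum, without having to show
that a term has only finitely many positions. -/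
theorem exists_hasRank_le_sizeOf
    (hL1 : ∀ t : Ctx F V, noHole t → ∃ L, TopOf 𝕃 t L ∧ L ≠ hole) :
    ∀ t : Ctx F V, noHole t → ∃ n ≤ sizeOf t, HasRank 𝕃 t n
  | t, ht => by
    obtain ⟨L₀, hL₀, hne⟩ := hL1 t ht
    obtain ⟨M, hM, hMne⟩ := exists_maxTopOf hL₀ hne
    have alien : ∀ tp, (∃ p, Tm.sub p M = some hole ∧ Tm.sub p t = some tp) →
        ∃ k < sizeOf t, HasRank 𝕃 tp k := by
      rintro tp ⟨_ | ⟨i, p⟩, hp, htp⟩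
      · exact absurd (Option.some_injective _ hp) hMne
      · have := Tm.sizeOf_lt_of_sub_cons htp
        obtain ⟨k, hk, h⟩ := exists_hasRank_le_sizeOf hL1 tp (noHole_of_sub ht htp)
        exact ⟨k, by omega, h⟩
    choose! κ hκ using alien
    set rk : List ℕ → ℕ := fun p => (Tm.sub p t).elim 0 κ
    set H := {p | Tm.sub p M = some hole}
    have hpos : 0 < sizeOf t := by
      cases t <;> simp only [Tm.var.sizeOf_spec, Tm.app.sizeOf_spec] <;> omega
    have hrk : ∀ k ∈ rk '' H, k ≤ sizeOf t - 1 := by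
      rintro _ ⟨p, hp, rfl⟩
      cases htp : Tm.sub p t with
      | none => simp [rk, htp]
      | some tp => have := (hκ tp ⟨p, hp, htp⟩).1; simp only [rk, htp, Option.elim_some]; omega
    have hbdd : BddAbove (rk '' H) := ⟨_, hrk⟩
    refine ⟨sSup (rk '' H) + 1, by have := csSup_le' hrk; omega,
      HasRank.intro t M _ rk hM (fun p tp hp htp => ?_)
        (fun p hp => le_csSup hbdd ⟨p, hp, rfl⟩) ?_⟩
    · simpa [rk, htp] using (hκ tp ⟨p, hp, htp⟩).2
    rcases (rk '' H).eq_empty_or_nonempty with he | hH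
    · exact .inl (by rw [he]; exact csSup_empty)
    obtain ⟨p, hp, hpn⟩ := Nat.sSup_mem hH hbdd
    cases htp : Tm.sub p t with
    | none => exact .inl (by rw [← hpn]; simp [rk, htp])
    | some tp => exact .inr ⟨p, tp, hp, htp, hpn⟩
termination_by t => sizeOf t

def termsOfRankLE (𝕃 : Set (Ctx F V)) (r : ℕ) : Set (Ctx F V) :=
  {t | noHole t ∧ ∃ k ≤ r, HasRank 𝕃 t k}

theorem mem_termsOfRankLE_of_steps {R : Set (Rule (F ⊕ Unit) V)} {r : ℕ}
    (hL1 : ∀ t : Ctx F V, noHole t → ∃ L, TopOf 𝕃 t L ∧ L ≠ hole)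
    (hR : ∀ ρ ∈ R, (∀ x ∈ ρ.rhs.vars, x ∈ ρ.lhs.vars) ∧ noHole ρ.rhs)
    (hmono : ∀ (s t : Ctx F V) (m n : ℕ), noHole s → Step R s t →
      HasRank 𝕃 s m → HasRank 𝕃 t n → n ≤ m)
    {s t : Ctx F V} (hs : s ∈ termsOfRankLE 𝕃 r) (h : Steps R s t) :
    t ∈ termsOfRankLE 𝕃 r := by
  induction h with
  | refl => exact hs
  | tail _ hstep ih =>
    obtain ⟨hb, k, hkr, hk⟩ := ih
    have hc := noHole_of_step hR hb hstep
    obtain ⟨m, -, hm⟩ := exists_hasRank_le_sizeOf hL1 _ hc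
    exact ⟨hc, m, (hmono _ _ k m hb hstep hk hm).trans hkr, hm⟩

end Rank

theorem balance_foreign_sequences_general (F V : Type)
    (𝕃 : Set (Ctx F V)) (R : Set (Rule (F ⊕ Unit) V))
    (hLS : LayerSystem 𝕃)
    (hR : ∀ ρ ∈ R, WfRule ρ ∧ noHole ρ.lhs ∧ noHole ρ.rhs)
    (r : Nat)
    (hconf : ConfluentOn R {t : Ctx F V | noHole t ∧ ∃ k ≤ r, HasRank 𝕃 t k})
    (hmono : ∀ (s t : Ctx F V) (m n : Nat), noHole s → Step R s t →
      HasRank 𝕃 s m → HasRank 𝕃 t n → n ≤ m)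
    (n : Nat) (s t u : Fin n → Ctx F V)
    (hforeign : ∀ i, noHole (s i) ∧ ∃ k ≤ r, HasRank 𝕃 (s i) k)
    (hst : ∀ i, Steps R (s i) (t i)) (hsu : ∀ i, Steps R (s i) (u i)) :
    ∃ v : Fin n → Ctx F V,
      (∀ i, (noHole (v i) ∧ ∃ k ≤ r, HasRank 𝕃 (v i) k) ∧
        Steps R (t i) (v i) ∧ Steps R (u i) (v i)) ∧
      (∀ i j, t i = t j → v i = v j) ∧
      (∀ i j, u i = u j → v i = v j) := by
  have hclosed :
      ∀ a b, a ∈ termsOfRankLE 𝕃 r → Steps R a b → b ∈ termsOfRankLE 𝕃 r :=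
    fun _ _ => mem_termsOfRankLE_of_steps hLS.L1
      (fun ρ hρ => ⟨(hR ρ hρ).1.2, (hR ρ hρ).2.2⟩) hmono
  obtain ⟨v, hv, htv, huv⟩ := exists_balanced_join hclosed hconf hforeign hst hsu
  have ht_mem i : t i ∈ termsOfRankLE 𝕃 r := hclosed _ _ (hforeign i) (hst i)
  exact ⟨v, fun i => ⟨hclosed _ _ (ht_mem i) (hv i).1, hv i⟩, htv, huv⟩

/-- balancing joins of foreign sequences. -/
theorem balance_foreign_sequences (F V : Type) [Countable V] [Infinite V]
    (𝕃 : Set (Ctx F V)) (R : Set (Rule (F ⊕ Unit) V))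
    (hLS : LayerSystem 𝕃) (hW : WeaklyLayered R 𝕃)
    (hR : ∀ ρ ∈ R, WfRule ρ ∧ noHole ρ.lhs ∧ noHole ρ.rhs)
    (r : Nat)
    (hconf : ConfluentOn R {t : Ctx F V | noHole t ∧ ∃ k ≤ r, HasRank 𝕃 t k})
    (hmono : ∀ (s t : Ctx F V) (m n : Nat), noHole s → Step R s t →
      HasRank 𝕃 s m → HasRank 𝕃 t n → n ≤ m)
    (n : Nat) (s t u : Fin n → Ctx F V)
    (hforeign : ∀ i, noHole (s i) ∧ ∃ k ≤ r, HasRank 𝕃 (s i) k)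
    (hst : ∀ i, Steps R (s i) (t i)) (hsu : ∀ i, Steps R (s i) (u i)) :
    ∃ v : Fin n → Ctx F V,
      (∀ i, (noHole (v i) ∧ ∃ k ≤ r, HasRank 𝕃 (v i) k) ∧
        Steps R (t i) (v i) ∧ Steps R (u i) (v i)) ∧
      (∀ i j, t i = t j → v i = v j) ∧
      (∀ i j, u i = u j → v i = v j) :=
  balance_foreign_sequences_general F V 𝕃 R hLS hR r hconf hmono n s t u hforeign hst hsu
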